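/- arXiv:math/0403132 — 3 statements merged into one kernel-verified Lean document; each statement's English description precedes it below -/
import Mathlib

section
/- Let n ≥ 1, k ≥ 0 and d ≥ k+2 be integers and let F ∈ R_k. If g ∈ R_{k+2} lies in W(x_0,F;k+2)^⊥ (the perpendicular inside R_{k+2} of W(x_0,F;k+2) = x_0^2·R_k + x_0·F·R_1), then for every h ∈ R_{d-k-2} the product h·g lies in W(x_0,F;d)^⊥ ⊆ R_d. In other words, R_{d-k-2}·(W(x_0,F;k+2)^⊥) ⊆ W(x_0,F;d)^⊥. -/
open MvPolynomial

/-- `G·V`, the image of the subspace `V` under multiplication by `G`. -/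
noncomputable def mulSub {K : Type*} [Field K] {σ : Type*} (G : MvPolynomial σ K)
    (V : Submodule K (MvPolynomial σ K)) : Submodule K (MvPolynomial σ K) :=
  V.map (LinearMap.mulLeft K G)

/-- `W(L,F;d) = L^{d-k}·R_k + L^{d-k-1}·F·R_1`, the affine cone over the tangent space
to the k-th osculating variety of the d-uple Veronese at the point `L^{d-k}F`. -/
noncomputable def Wspace {K : Type*} [Field K] {σ : Type*} (k d : ℕ)
    (L F : MvPolynomial σ K) : Submodule K (MvPolynomial σ K) :=
  mulSub (L ^ (d - k)) (homogeneousSubmodule σ K k) ⊔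
    mulSub (L ^ (d - k - 1) * F) (homogeneousSubmodule σ K 1)

/-- the apolarity pairing `φ(f,g) = Σ_I f_I g_I`. -/
noncomputable def apol {K : Type*} [Field K] {σ : Type*} (f g : MvPolynomial σ K) : K :=
  ∑ I ∈ f.support, f.coeff I * g.coeff I

/-- the perpendicular of a set of forms, inside `R_d`, w.r.t. the apolarity pairing -/
def perpSet {K : Type*} [Field K] {σ : Type*} (d : ℕ) (V : Set (MvPolynomial σ K)) :
    Set (MvPolynomial σ K) :=
  {f | f ∈ homogeneousSubmodule σ K d ∧ ∀ v ∈ V, apol f v = 0}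

/-!
Write `m = d - k - 2`. Every element of `W(x_0,F;d)` has the form `x_0^m w'` with
`w' ∈ W(x_0,F;k+2)`, and is divisible by `x_0^{m+1}`. Being apolar to `x_0^2·R_k`, the form
`g` only involves monomials of `x_0`-degree at most one. Split `h = c·x_0^m + h'`, where every
monomial of `h'` has `x_0`-degree below `m`. Since multiplying both arguments by the same
monomial does not change the apolarity pairing, `φ(c·x_0^m g, x_0^m w') = c·φ(g, w') = 0`;
and every monomial of `h' g` has `x_0`-degree at most `m`, so it is missing from `x_0^m w'`.
-/

section Monomials

variable {R : Type*} [CommSemiring R] {σ : Type*}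

theorem coeff_eq_zero_of_X_pow_dvd {i : σ} {t : ℕ} {q : MvPolynomial σ R} (hq : X i ^ t ∣ q)
    {I : σ →₀ ℕ} (hI : I i < t) : q.coeff I = 0 := by
  obtain ⟨r, rfl⟩ := hq
  rw [X_pow_eq_monomial, coeff_monomial_mul', if_neg (by rwa [Finsupp.single_le_iff, not_le])]

theorem apply_lt_of_mem_support_mul {a b : MvPolynomial σ R} {i : σ} {s t : ℕ}
    (ha : ∀ J ∈ a.support, J i < s) (hb : ∀ M ∈ b.support, M i ≤ t) :
    ∀ I ∈ (a * b).support, I i < s + t := by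
  classical
  intro I hI
  obtain ⟨J, hJ, M, hM, rfl⟩ := Finset.mem_add.mp (support_mul a b hI)
  have := ha J hJ
  have := hb M hM
  rw [Finsupp.add_apply]
  omega

end Monomials

theorem Finsupp.eq_single_of_degree_eq_apply {σ : Type*} {J : σ →₀ ℕ} {i : σ}
    (h : J.degree = J i) :
    J = Finsupp.single i (J i) := by
  have hsplit := Finsupp.single_add_erase i J
  have herase : (J.erase i).degree = 0 := by
    have := congrArg Finsupp.degree hsplit
    rw [map_add, Finsupp.degree_single] at this
    omega
  rw [Finsupp.degree_eq_zero_iff] at herase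
  rw [herase, add_zero] at hsplit
  exact hsplit.symm

theorem MvPolynomial.IsHomogeneous.exists_eq_monomial_add {R : Type*} [CommRing R] {σ : Type*}
    {h : MvPolynomial σ R} {m : ℕ} (hh : h.IsHomogeneous m) (i : σ) :
    ∃ c h', h = monomial (Finsupp.single i m) c + h' ∧ ∀ J ∈ h'.support, J i < m := by
  classical
  set c := h.coeff (Finsupp.single i m)
  refine ⟨c, h - monomial (Finsupp.single i m) c, by abel, fun J hJ => ?_⟩
  have hdeg : J.degree = m :=
    ((hh.sub (isHomogeneous_monomial c (Finsupp.degree_single i m))).degree_eq_sum_deg_support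
      hJ).symm
  refine lt_of_le_of_ne (hdeg ▸ Finsupp.le_degree i J) fun hJi => ?_
  obtain rfl : J = Finsupp.single i m :=
    hJi ▸ Finsupp.eq_single_of_degree_eq_apply (hdeg.trans hJi.symm)
  exact mem_support_iff.mp hJ (by simp [c])

section Apolarity

variable {K : Type*} [Field K] {σ : Type*}

theorem apol_eq_sum_of_support_subset {f g : MvPolynomial σ K} {s : Finset (σ →₀ ℕ)}
    (hs : f.support ⊆ s) : apol f g = ∑ I ∈ s, f.coeff I * g.coeff I :=
  Finset.sum_subset hs fun I _ hI => by rw [notMem_support_iff.mp hI, zero_mul]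

theorem apol_add_left (a b g : MvPolynomial σ K) : apol (a + b) g = apol a g + apol b g := by
  classical
  rw [apol_eq_sum_of_support_subset support_add,
    apol_eq_sum_of_support_subset (s := a.support ∪ b.support) Finset.subset_union_left,
    apol_eq_sum_of_support_subset (s := a.support ∪ b.support) Finset.subset_union_right,
    ← Finset.sum_add_distrib]
  simp only [coeff_add, add_mul]

theorem apol_monomial_one_right (f : MvPolynomial σ K) (M : σ →₀ ℕ) :
    apol f (monomial M 1) = f.coeff M := by
  classical
  rw [apol, Finset.sum_eq_single M
    (fun I _ hI => by rw [coeff_monomial, if_neg hI.symm, mul_zero])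
    (fun hM => by rw [notMem_support_iff.mp hM, zero_mul]), coeff_monomial, if_pos rfl, mul_one]

theorem apol_monomial_mul_monomial_mul (J : σ →₀ ℕ) (c : K) (f q : MvPolynomial σ K) :
    apol (monomial J c * f) (monomial J 1 * q) = c * apol f q := by
  classical
  have hs : (monomial J c * f).support ⊆ f.support.map (addLeftEmbedding J) := by
    intro I hI
    rw [mem_support_iff, coeff_monomial_mul'] at hI
    split_ifs at hI with hJI
    · exact Finset.mem_map.mpr ⟨I - J, mem_support_iff.mpr (right_ne_zero_of_mul hI),
        add_tsub_cancel_of_le hJI⟩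
    · exact absurd rfl hI
  rw [apol_eq_sum_of_support_subset hs, Finset.sum_map, apol, Finset.mul_sum]
  refine Finset.sum_congr rfl fun I _ => ?_
  simp only [addLeftEmbedding_apply, coeff_monomial_mul, one_mul, mul_assoc]

theorem apol_eq_zero_of_X_pow_dvd {f q : MvPolynomial σ K} {i : σ} {t : ℕ}
    (hf : ∀ I ∈ f.support, I i < t) (hq : X i ^ t ∣ q) : apol f q = 0 :=
  Finset.sum_eq_zero fun I hI => by rw [coeff_eq_zero_of_X_pow_dvd hq (hf I hI), mul_zero]

end Apolarity

section Wspace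

variable {K : Type*} [Field K] {σ : Type*}

theorem Wspace_add_eq_mulSub_pow (L F : MvPolynomial σ K) {k d : ℕ} (hkd : k < d) (m : ℕ) :
    Wspace k (d + m) L F = mulSub (L ^ m) (Wspace k d L F) := by
  have h₁ : d + m - k = m + (d - k) := by omega
  have h₂ : m + (d - k) - 1 = m + (d - k - 1) := by omega
  simp only [Wspace, mulSub, Submodule.map_sup, ← Submodule.map_comp, ← LinearMap.mulLeft_mul,
    h₁, h₂, pow_add, mul_assoc]

theorem pow_dvd_of_mem_Wspace {k d : ℕ} {L F w : MvPolynomial σ K} (hw : w ∈ Wspace k d L F) :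
    L ^ (d - k - 1) ∣ w := by
  obtain ⟨y, hy, z, hz, rfl⟩ := Submodule.mem_sup.mp hw
  obtain ⟨p, -, rfl⟩ := Submodule.mem_map.mp hy
  obtain ⟨l, -, rfl⟩ := Submodule.mem_map.mp hz
  refine dvd_add (Dvd.dvd.mul_right (pow_dvd_pow L (Nat.sub_le _ 1)) p) ?_
  exact Dvd.intro (F * l) (by simp only [LinearMap.mulLeft_apply, mul_assoc])

theorem apply_lt_of_mem_support_of_mem_perpSet_Wspace {i : σ} {k d : ℕ}
    {F g : MvPolynomial σ K} (hkd : k ≤ d) (hg : g ∈ perpSet d (Wspace k d (X i) F : Set _)) :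
    ∀ M ∈ g.support, M i < d - k := by
  intro M hM
  by_contra! hle
  have hMdeg : M.degree = d :=
    (((mem_homogeneousSubmodule d g).mp hg.1).degree_eq_sum_deg_support hM).symm
  set M' := M - Finsupp.single i (d - k)
  have hsplit : Finsupp.single i (d - k) + M' = M :=
    add_tsub_cancel_of_le (Finsupp.single_le_iff.mpr hle)
  have hM'deg : M'.degree = k := by
    have := congrArg Finsupp.degree hsplit
    rw [map_add, Finsupp.degree_single, hMdeg] at this
    omega
  have hmem : X i ^ (d - k) * monomial M' 1 ∈ Wspace k d (X i) F :=
    Submodule.mem_sup_left (Submodule.mem_map_of_mem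
      ((mem_homogeneousSubmodule k _).mpr (isHomogeneous_monomial 1 hM'deg)))
  have hperp := hg.2 _ hmem
  rw [X_pow_eq_monomial, monomial_mul, one_mul, hsplit, apol_monomial_one_right] at hperp
  exact mem_support_iff.mp hM hperp

end Wspace

theorem stmt4_general {K : Type*} [Field K] (n k d : ℕ) (hd : k + 2 ≤ d)
    (F : MvPolynomial (Fin (n+1)) K)
    (g : MvPolynomial (Fin (n+1)) K)
    (hg : g ∈ perpSet (k + 2) ((Wspace k (k + 2) (X 0) F :
      Submodule K (MvPolynomial (Fin (n+1)) K)) : Set (MvPolynomial (Fin (n+1)) K)))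
    (h : MvPolynomial (Fin (n+1)) K)
    (hh : h ∈ homogeneousSubmodule (Fin (n+1)) K (d - k - 2)) :
    h * g ∈ perpSet d ((Wspace k d (X 0) F :
      Submodule K (MvPolynomial (Fin (n+1)) K)) : Set (MvPolynomial (Fin (n+1)) K)) := by
  obtain ⟨m, rfl⟩ : ∃ m, d = k + 2 + m := ⟨d - (k + 2), by omega⟩
  rw [show k + 2 + m - k - 2 = m by omega, mem_homogeneousSubmodule] at hh
  have hg₁ : ∀ M ∈ g.support, M 0 ≤ 1 := fun M hM => by
    have := apply_lt_of_mem_support_of_mem_perpSet_Wspace (by omega) hg M hM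
    omega
  refine ⟨(mem_homogeneousSubmodule _ _).mpr ?_, fun w hw => ?_⟩
  · have := hh.mul ((mem_homogeneousSubmodule _ _).mp hg.1)
    rwa [add_comm m] at this
  have hdvd : X 0 ^ (m + 1) ∣ w := by
    simpa [show k + 2 + m - k - 1 = m + 1 by omega] using pow_dvd_of_mem_Wspace hw
  rw [SetLike.mem_coe, Wspace_add_eq_mulSub_pow _ _ (by omega)] at hw
  obtain ⟨w', hw', rfl⟩ := Submodule.mem_map.mp hw
  obtain ⟨c, h', rfl, hh'⟩ := hh.exists_eq_monomial_add 0
  have hlead : apol (monomial (Finsupp.single 0 m) c * g) (X 0 ^ m * w') = 0 := by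
    rw [X_pow_eq_monomial, apol_monomial_mul_monomial_mul, hg.2 w' hw', mul_zero]
  have htail : apol (h' * g) (X 0 ^ m * w') = 0 :=
    apol_eq_zero_of_X_pow_dvd (apply_lt_of_mem_support_mul hh' hg₁) hdvd
  rw [LinearMap.mulLeft_apply, add_mul, apol_add_left, hlead, htail, add_zero]

/-- for `d ≥ k+2`, multiplying an element of `W(x_0,F;k+2)^⊥ ⊆ R_{k+2}` by any
form of degree `d-k-2` gives an element of `W(x_0,F;d)^⊥ ⊆ R_d`. -/
theorem stmt4 {K : Type*} [Field K] [CharZero K] (n k d : ℕ) (hn : 1 ≤ n) (hd : k + 2 ≤ d)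
    (F : MvPolynomial (Fin (n+1)) K) (hF : F ∈ homogeneousSubmodule (Fin (n+1)) K k)
    (g : MvPolynomial (Fin (n+1)) K)
    (hg : g ∈ perpSet (k + 2) ((Wspace k (k + 2) (X 0) F :
      Submodule K (MvPolynomial (Fin (n+1)) K)) : Set (MvPolynomial (Fin (n+1)) K)))
    (h : MvPolynomial (Fin (n+1)) K)
    (hh : h ∈ homogeneousSubmodule (Fin (n+1)) K (d - k - 2)) :
    h * g ∈ perpSet d ((Wspace k d (X 0) F :
      Submodule K (MvPolynomial (Fin (n+1)) K)) : Set (MvPolynomial (Fin (n+1)) K)) :=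
  stmt4_general n k d hd F g hg h hh
end

section
/- Let n ≥ 1 and k ≥ 0 be integers and let d = k+1. Then there exist forms F_1,…,F_n ∈ R_k such that x_0·R_k + F_1·R_1 + x_1·R_k + F_2·R_1 + ⋯ + x_{n-1}·R_k + F_n·R_1 = R_{k+1}; i.e. the sum of the n subspaces W(x_{i-1},F_i;k+1), i = 1,…,n, is all of R_{k+1}. (Hence the n-th secant variety of the (d−1)-th osculating variety of the d-uple Veronese fills its ambient projective space.) -/
open MvPolynomial

/-! Take every `F_i = x_n^k`. Monomials span `R_{k+1}`, and a monomial of degree `k+1` divisible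
by some `x_i` with `i < n` lies in `x_i·R_k`; the only other one is `x_n^{k+1} = F_1·x_n`. -/

lemma Wspace_succ {K σ : Type*} [Field K] (k : ℕ) (L F : MvPolynomial σ K) :
    Wspace k (k + 1) L F =
      mulSub L (homogeneousSubmodule σ K k) ⊔ mulSub F (homogeneousSubmodule σ K 1) := by
  simp [Wspace]

lemma mulSub_homogeneousSubmodule_le {K σ : Type*} [Field K] {G : MvPolynomial σ K} {a : ℕ}
    (hG : G.IsHomogeneous a) (b : ℕ) :
    mulSub G (homogeneousSubmodule σ K b) ≤ homogeneousSubmodule σ K (a + b) := by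
  rintro _ ⟨v, hv, rfl⟩
  exact hG.mul hv

lemma monomial_mem_mulSub_monomial {K σ : Type*} [Field K] {a m : σ →₀ ℕ} {b : ℕ}
    (ham : a ≤ m) (hdeg : a.degree + b = m.degree) (c : K) :
    monomial m c ∈ mulSub (monomial a 1) (homogeneousSubmodule σ K b) := by
  have hsplit : a + (m - a) = m := add_tsub_cancel_of_le ham
  have hb : (m - a).degree = b := by
    have := congrArg Finsupp.degree hsplit
    rw [map_add] at this
    omega
  exact ⟨monomial (m - a) c, isHomogeneous_monomial c hb, by simp [monomial_mul, hsplit]⟩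

lemma Finsupp.exists_single_castSucc_le_or_eq_single_last {n : ℕ} (m : Fin (n + 1) →₀ ℕ) :
    (∃ i : Fin n, Finsupp.single i.castSucc 1 ≤ m) ∨
      m = Finsupp.single (Fin.last n) m.degree := by
  by_cases h : ∀ i : Fin n, m i.castSucc = 0
  · have hm : m = Finsupp.single (Fin.last n) (m (Fin.last n)) := by
      ext j
      induction j using Fin.lastCases with
      | last => simp
      | cast i => simp [h i]
    right
    conv_rhs => rw [hm, Finsupp.degree_single]
    exact hm
  · obtain ⟨i, hi⟩ := not_forall.mp h
    exact Or.inl ⟨i, Finsupp.single_le_iff.mpr (Nat.one_le_iff_ne_zero.mpr hi)⟩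

theorem stmt6_general {K : Type*} [Field K] (n k : ℕ) (hn : 1 ≤ n) :
    ∃ F : Fin n → MvPolynomial (Fin (n+1)) K,
      (∀ i, F i ∈ homogeneousSubmodule (Fin (n+1)) K k) ∧
      (⨆ i : Fin n, Wspace k (k + 1) (X (Fin.castSucc i)) (F i)) =
        homogeneousSubmodule (Fin (n+1)) K (k + 1) := by
  have hXk : (X (Fin.last n) ^ k : MvPolynomial (Fin (n + 1)) K).IsHomogeneous k := by
    simpa using (isHomogeneous_X K (Fin.last n)).pow k
  refine ⟨fun _ => X (Fin.last n) ^ k, fun _ => hXk, le_antisymm ?_ ?_⟩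
  · refine iSup_le fun i => ?_
    rw [Wspace_succ]
    exact sup_le
      (by simpa [add_comm] using mulSub_homogeneousSubmodule_le (isHomogeneous_X K i.castSucc) k)
      (mulSub_homogeneousSubmodule_le hXk 1)
  · rw [homogeneousSubmodule_eq_finsupp_supported, ← restrictSupport, restrictSupport_eq_span,
      Submodule.span_le]
    rintro _ ⟨m, hm : m.degree = k + 1, rfl⟩
    rcases Finsupp.exists_single_castSucc_le_or_eq_single_last m with ⟨i, hi⟩ | hlast
    · refine Submodule.mem_iSup_of_mem i ?_
      rw [Wspace_succ]
      refine Submodule.mem_sup_left ?_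
      exact monomial_mem_mulSub_monomial hi (by simp [hm, add_comm]) 1
    · refine Submodule.mem_iSup_of_mem ⟨0, hn⟩ ?_
      rw [Wspace_succ, X_pow_eq_monomial]
      refine Submodule.mem_sup_right ?_
      refine monomial_mem_mulSub_monomial ?_ (by simp [hm]) 1
      rw [hlast, hm]
      exact Finsupp.single_le_single.mpr (Nat.le_succ k)

/-- for `d = k+1` there are forms `F_1,…,F_n ∈ R_k` with
`W(x_0,F_1;k+1) + ⋯ + W(x_{n-1},F_n;k+1) = R_{k+1}`, i.e. the n-th secant variety of the
(d−1)-th osculating variety of the d-uple Veronese fills its ambient space. -/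
theorem stmt6 {K : Type*} [Field K] [CharZero K] (n k : ℕ) (hn : 1 ≤ n) :
    ∃ F : Fin n → MvPolynomial (Fin (n+1)) K,
      (∀ i, F i ∈ homogeneousSubmodule (Fin (n+1)) K k) ∧
      (⨆ i : Fin n, Wspace k (k + 1) (X (Fin.castSucc i)) (F i)) =
        homogeneousSubmodule (Fin (n+1)) K (k + 1) :=
  stmt6_general n k hn
end

section
/- Let n = 2, k ≥ 1 and d = k+2. Then for ALL linear forms L_1, L_2 ∈ R_1 and all F_1, F_2 ∈ R_k in R = K[x_0,x_1,x_2], the sum W(L_1,F_1;k+2) + W(L_2,F_2;k+2) is a proper subspace of R_{k+2}. Since 2·(C(k+2,2)+2) ≥ C(k+4,2) for k ≥ 1 (so the expected dimension is all of R_{k+2}), the second secant variety of the k-th osculating variety of the (k+2)-uple Veronese surface is defective. -/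
/-!
Two linear forms in three variables have a common zero `p ≠ 0`. Since `d = k + 2`, both
summands of each `W(Lᵢ,Fᵢ;d)` are divisible by `Lᵢ`, so every form in the sum vanishes at `p`,
whereas `x_j^d` does not for a coordinate with `p j ≠ 0`.
-/

open MvPolynomial

section

variable {K : Type*} [Field K] {σ : Type*}

lemma exists_linearMap_eq_eval_of_mem_homogeneousSubmodule_one [Fintype σ]
    {L : MvPolynomial σ K} (hL : L ∈ homogeneousSubmodule σ K 1) :
    ∃ φ : (σ → K) →ₗ[K] K, ∀ p, φ p = eval p L := by
  rw [homogeneousSubmodule_one_eq_span_X, Submodule.mem_span_range_iff_exists_fun] at hL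
  obtain ⟨c, rfl⟩ := hL
  exact ⟨∑ i, c i • LinearMap.proj i, fun p => by simp [LinearMap.sum_apply, smul_eq_C_mul]⟩

lemma exists_ne_zero_forall_eval_eq_zero [Fintype σ] {ι : Type*} [Fintype ι]
    (L : ι → MvPolynomial σ K) (hL : ∀ i, L i ∈ homogeneousSubmodule σ K 1)
    (hcard : Fintype.card ι < Fintype.card σ) :
    ∃ p : σ → K, p ≠ 0 ∧ ∀ i, eval p (L i) = 0 := by
  choose φ hφ using fun i => exists_linearMap_eq_eval_of_mem_homogeneousSubmodule_one (hL i)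
  have hker : LinearMap.ker (LinearMap.pi φ) ≠ ⊥ :=
    LinearMap.ker_ne_bot_of_finrank_lt (by simpa using hcard)
  obtain ⟨p, hp, hp0⟩ := Submodule.exists_mem_ne_zero_of_ne_bot hker
  exact ⟨p, hp0, fun i => hφ i p ▸ congrFun (LinearMap.mem_ker.mp hp) i⟩

lemma mulSub_le_homogeneousSubmodule {G : MvPolynomial σ K} {m : ℕ} (hG : G.IsHomogeneous m)
    (n : ℕ) : mulSub G (homogeneousSubmodule σ K n) ≤ homogeneousSubmodule σ K (m + n) := by
  rintro _ ⟨v, hv, rfl⟩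
  exact hG.mul hv

lemma mulSub_le_ker_aeval {G : MvPolynomial σ K} {p : σ → K} (hG : eval p G = 0)
    (V : Submodule K (MvPolynomial σ K)) :
    mulSub G V ≤ LinearMap.ker (aeval p).toLinearMap := by
  rintro _ ⟨v, -, rfl⟩
  simp [hG]

lemma Wspace_le_homogeneousSubmodule {k d : ℕ} (hkd : k < d) {L F : MvPolynomial σ K}
    (hL : L ∈ homogeneousSubmodule σ K 1) (hF : F ∈ homogeneousSubmodule σ K k) :
    Wspace k d L F ≤ homogeneousSubmodule σ K d := by
  rw [mem_homogeneousSubmodule] at hL hF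
  apply sup_le
  · convert mulSub_le_homogeneousSubmodule (hL.pow (d - k)) k using 2
    omega
  · convert mulSub_le_homogeneousSubmodule ((hL.pow (d - k - 1)).mul hF) 1 using 2
    omega

lemma Wspace_le_ker_aeval {k d : ℕ} (hkd : k + 2 ≤ d) {L : MvPolynomial σ K}
    (F : MvPolynomial σ K) {p : σ → K} (hL : eval p L = 0) :
    Wspace k d L F ≤ LinearMap.ker (aeval p).toLinearMap := by
  obtain ⟨e, he⟩ : ∃ e, d - k = e + 2 := ⟨d - k - 2, by omega⟩
  apply sup_le <;> apply mulSub_le_ker_aeval <;> simp [he, hL]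

end

theorem stmt16_general {K : Type*} [Field K] (k : ℕ)
    (L₁ L₂ F₁ F₂ : MvPolynomial (Fin 3) K)
    (hL₁ : L₁ ∈ homogeneousSubmodule (Fin 3) K 1)
    (hL₂ : L₂ ∈ homogeneousSubmodule (Fin 3) K 1)
    (hF₁ : F₁ ∈ homogeneousSubmodule (Fin 3) K k)
    (hF₂ : F₂ ∈ homogeneousSubmodule (Fin 3) K k) :
    Wspace k (k + 2) L₁ F₁ ⊔ Wspace k (k + 2) L₂ F₂ <
      homogeneousSubmodule (Fin 3) K (k + 2) := by
  obtain ⟨p, hp, hLp⟩ := exists_ne_zero_forall_eval_eq_zero ![L₁, L₂]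
    (Fin.forall_fin_two.2 ⟨hL₁, hL₂⟩) (by simp)
  obtain ⟨j, hj⟩ := Function.ne_iff.1 hp
  refine SetLike.lt_iff_le_and_exists.2
    ⟨sup_le (Wspace_le_homogeneousSubmodule (by omega) hL₁ hF₁)
      (Wspace_le_homogeneousSubmodule (by omega) hL₂ hF₂),
    X j ^ (k + 2), isHomogeneous_X_pow j (k + 2), fun hX => hj ?_⟩
  have hvanish := sup_le (Wspace_le_ker_aeval le_rfl F₁ (hLp 0))
    (Wspace_le_ker_aeval le_rfl F₂ (hLp 1)) hX
  simpa using hvanish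

/-- for `n = 2`, `k ≥ 1`, `d = k+2`, for ALL linear forms `L₁, L₂` and all
`F₁, F₂ ∈ R_k` in three variables, `W(L₁,F₁;k+2) + W(L₂,F₂;k+2)` is a proper subspace of
`R_{k+2}`: the second secant variety of the k-th osculating variety of the (k+2)-uple
Veronese surface is defective. -/
theorem stmt16 {K : Type*} [Field K] [CharZero K] (k : ℕ) (hk : 1 ≤ k)
    (L₁ L₂ F₁ F₂ : MvPolynomial (Fin 3) K)
    (hL₁ : L₁ ∈ homogeneousSubmodule (Fin 3) K 1)
    (hL₂ : L₂ ∈ homogeneousSubmodule (Fin 3) K 1)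
    (hF₁ : F₁ ∈ homogeneousSubmodule (Fin 3) K k)
    (hF₂ : F₂ ∈ homogeneousSubmodule (Fin 3) K k) :
    Wspace k (k + 2) L₁ F₁ ⊔ Wspace k (k + 2) L₂ F₂ <
      homogeneousSubmodule (Fin 3) K (k + 2) :=
  stmt16_general k L₁ L₂ F₁ F₂ hL₁ hL₂ hF₁ hF₂
end
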